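/- arXiv:2108.03178 — 3 statements merged into one kernel-verified Lean document; each statement's English description precedes it below -/
import Mathlib

section
/- Let S be a type, r : S → S → Prop a transition relation, I ⊆ S a set of initial states, Exit ⊆ S a set of safe final states and Err ⊆ S a set of error states. Let φ_s, φ_u ⊆ S be such that every state of I from which some state of Exit is reachable lies in φ_s, and every state of I from which some state of Err is reachable lies in φ_u (φ_s and φ_u are necessary preconditions for safety and unsafety). If φ_s ∩ φ_u = ∅ (the preconditions are separating), then no state of Err is reachable from any state of I ∩ φ_s, and no state of Exit is reachable from any state of I ∩ φ_u; that is, φ_s is also a sufficient precondition for safety and φ_u is also a sufficient precondition for unsafety. -/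
theorem separating_np_is_sp {S : Type*} (r : S → S → Prop) (I Exit Err : Set S)
    (φs φu : Set S)
    (hs : ∀ s ∈ I, (∃ t ∈ Exit, Relation.ReflTransGen r s t) → s ∈ φs)
    (hu : ∀ s ∈ I, (∃ t ∈ Err, Relation.ReflTransGen r s t) → s ∈ φu)
    (hsep : φs ∩ φu = ∅) :
    (∀ s ∈ I ∩ φs, ∀ t ∈ Err, ¬ Relation.ReflTransGen r s t) ∧
    (∀ s ∈ I ∩ φu, ∀ t ∈ Exit, ¬ Relation.ReflTransGen r s t) := by
  constructor
  · rintro s ⟨hI, hφ⟩ t ht hr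
    have : s ∈ φs ∩ φu := ⟨hφ, hu s hI ⟨t, ht, hr⟩⟩
    simp [hsep] at this
  · rintro s ⟨hI, hφ⟩ t ht hr
    have : s ∈ φs ∩ φu := ⟨hs s hI ⟨t, ht, hr⟩, hφ⟩
    simp [hsep] at this
end

section
/- For all integers A and B: there exist integers a, b with Reach A B a b, a < 1 and b < 0 (an error state is reachable from (A, B)) if and only if (B < 0 ∧ A ≤ 0) ∨ (A ≥ 1 ∧ A > B). That is, the program's assertion is violated exactly on the initial states satisfying (b < 0 ∧ a ≤ 0) ∨ (a ≥ 1 ∧ a > b). -/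
def step : ℤ × ℤ → ℤ × ℤ → Prop :=
  fun p q => p.1 ≥ 1 ∧ q.1 = p.1 - 1 ∧ q.2 = p.2 - 1

def Reach (A B a b : ℤ) : Prop :=
  Relation.ReflTransGen step (A, B) (a, b)

lemma reach_inv {A B : ℤ} {p : ℤ × ℤ} (h : Relation.ReflTransGen step (A, B) p) :
    (p.1 = A ∧ p.2 = B) ∨ (0 ≤ p.1 ∧ p.1 ≤ A - 1 ∧ A - p.1 = B - p.2) := by
  induction h with
  | refl => left; exact ⟨rfl, rfl⟩
  | tail _ hs ih =>
    rename_i q r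
    obtain ⟨h1, h2, h3⟩ := hs
    right
    rcases ih with ⟨e1, e2⟩ | ⟨g0, g1, g2⟩ <;>
      constructor <;> [skip; constructor; skip; constructor] <;> omega

lemma reach_steps (n : ℕ) (A B : ℤ) (h : (n : ℤ) ≤ A) :
    Reach A B (A - n) (B - n) := by
  induction n with
  | zero => have h0 : Reach A B A B := Relation.ReflTransGen.refl; simpa using h0
  | succ k ih =>
    have hk : (k : ℤ) ≤ A := by push_cast at h ⊢; omega
    refine Relation.ReflTransGen.tail (ih hk) ?_
    refine ⟨by push_cast at h ⊢; omega, by push_cast; ring, by push_cast; ring⟩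

theorem error_reachable_iff (A B : ℤ) :
    (∃ a b : ℤ, Reach A B a b ∧ a < 1 ∧ b < 0) ↔
      (B < 0 ∧ A ≤ 0) ∨ (A ≥ 1 ∧ A > B) := by
  constructor
  · rintro ⟨a, b, hr, ha, hb⟩
    have := reach_inv (p := (a, b)) hr
    simp only at this
    omega
  · rintro (⟨hB, hA⟩ | ⟨hA, hAB⟩)
    · exact ⟨A, B, Relation.ReflTransGen.refl, by omega, hB⟩
    · refine ⟨A - A.toNat, B - A.toNat, reach_steps A.toNat A B (by omega), by omega, by omega⟩
end

section
/- Let r be the relation on ℤ defined by r a a' ↔ 0 ≤ a ∧ ((a ≤ 9 ∧ a' = a + 1) ∨ (a = 10 ∧ a' = 5)), and let reachability be the reflexive–transitive closure of r. For every integer a: (i) some state a' with a' < 0 is reachable from a if and only if a < 0; (ii) some state a' with a' ≥ 11 is reachable from a if and only if a ≥ 11. Hence a < 0 is the exact necessary precondition for reaching the error of the program of Fig. 6 and a ≥ 11 is the exact necessary precondition for its safe return. -/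
def r : ℤ → ℤ → Prop :=
  fun a a' => 0 ≤ a ∧ ((a ≤ 9 ∧ a' = a + 1) ∨ (a = 10 ∧ a' = 5))

lemma reach_inv_s16 {a a' : ℤ} (h : Relation.ReflTransGen r a a') :
    a' = a ∨ (0 ≤ a' ∧ a' ≤ 10) := by
  induction h with
  | refl => exact Or.inl rfl
  | tail _ hstep _ =>
    rcases hstep with ⟨hb, h1 | h2⟩
    · right; omega
    · right; omega

theorem exact_necessary_preconditions (a : ℤ) :
    ((∃ a' : ℤ, a' < 0 ∧ Relation.ReflTransGen r a a') ↔ a < 0) ∧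
    ((∃ a' : ℤ, a' ≥ 11 ∧ Relation.ReflTransGen r a a') ↔ a ≥ 11) := by
  constructor
  · constructor
    · rintro ⟨a', h, hr⟩
      rcases reach_inv_s16 hr with rfl | h2 <;> omega
    · intro h; exact ⟨a, h, Relation.ReflTransGen.refl⟩
  · constructor
    · rintro ⟨a', h, hr⟩
      rcases reach_inv_s16 hr with rfl | h2 <;> omega
    · intro h; exact ⟨a, h, Relation.ReflTransGen.refl⟩
end
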